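/- Suppose p, q : ℝ² → ℝ^N (functions of x and t) satisfy the backward Neumann systems (3.9) in x and (3.10) in t, with ⟨p,p⟩ = 1, ⟨p,q⟩ = 0, ⟨Λp,p⟩ ≠ 0, and ⟨q,q⟩ + ⟨Λ²p,p⟩/⟨Λp,p⟩² = α. Then v = ⟨Λp,p⟩^{−2} and w = −⟨Λ⁻¹p,p⟩ satisfy the conservation law v_t = −2v w_x − v_x w. -/

import Mathlib

/-!
With `E = ⟨Λp,p⟩`, `F = ⟨Λp,q⟩`, `A = ⟨Λ⁻¹p,q⟩`, `B = ⟨Λ⁻¹p,p⟩`, differentiating the quadratic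
forms along the flows gives `E_x = 2F`, `w_x = -2A` and, using `⟨p,q⟩ = 0` to kill the
contribution of the `Λ⁻¹q` term, `E_t = 2(BF - AE)`. Since `v = E⁻²` has `v_• = -2E_•/E³`,
both sides of the conservation law equal `4A/E² - 4BF/E³`.
-/

open Finset

section QuadraticForm

variable {ι : Type*} [Fintype ι]

theorem hasDerivAt_sum_mul_sq (c : ι → ℝ) {f : ℝ → ι → ℝ} {f' : ι → ℝ} {x : ℝ}
    (hf : ∀ i, HasDerivAt (fun y => f y i) (f' i) x) :
    HasDerivAt (fun y => ∑ i, c i * f y i ^ 2) (2 * ∑ i, c i * f x i * f' i) x := by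
  refine (HasDerivAt.fun_sum fun i (_ : i ∈ univ) =>
    ((hf i).fun_pow 2).const_mul (c i)).congr_deriv ?_
  rw [mul_sum]
  exact sum_congr rfl fun i _ => by push_cast; ring

theorem sum_mul_mul_neumann_flow {c : ι → ℝ} (hc : ∀ i, c i ≠ 0) (a b : ι → ℝ) (A B : ℝ) :
    ∑ i, c i * a i * (-A * a i + B * b i + (c i)⁻¹ * b i)
      = -A * ∑ i, c i * a i ^ 2 + B * ∑ i, c i * a i * b i + ∑ i, a i * b i := by
  simp only [mul_sum, ← sum_add_distrib]
  refine sum_congr rfl fun i _ => ?_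
  field_simp [hc i]

end QuadraticForm

theorem HasDerivAt.one_div_sq {g : ℝ → ℝ} {g' x : ℝ} (hg : HasDerivAt g g' x) (hx : g x ≠ 0) :
    HasDerivAt (fun y => 1 / g y ^ 2) (-2 * g' / g x ^ 3) x := by
  simp only [one_div]
  refine ((hg.fun_pow 2).fun_inv (pow_ne_zero 2 hx)).congr_deriv ?_
  push_cast
  field_simp

theorem stmt_19_general (N : ℕ) (lam : Fin N → ℝ)
    (hne : ∀ j, lam j ≠ 0)
    (p q : ℝ → ℝ → Fin N → ℝ)
    (hΛpp : ∀ x t, ∑ j, lam j * (p x t j)^2 ≠ 0)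
    (hpx : ∀ x t j, HasDerivAt (fun y => p y t j) (q x t j) x)
    (hpt : ∀ x t j, HasDerivAt (fun s => p x s j)
      (-(∑ i, (lam i)⁻¹ * p x t i * q x t i) * p x t j
        + (∑ i, (lam i)⁻¹ * (p x t i)^2) * q x t j
        + (lam j)⁻¹ * q x t j) t)
    (htangent : ∀ x t, ∑ j, p x t j * q x t j = 0) :
    let v : ℝ → ℝ → ℝ := fun x t => 1 / (∑ j, lam j * (p x t j)^2)^2
    let w : ℝ → ℝ → ℝ := fun x t => -(∑ j, (lam j)⁻¹ * (p x t j)^2)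
    ∀ x t, deriv (fun s => v x s) t
      = -2 * v x t * deriv (fun y => w y t) x - deriv (fun y => v y t) x * w x t := by
  intro v w x t
  have hEt := hasDerivAt_sum_mul_sq lam (hpt x t)
  rw [sum_mul_mul_neumann_flow hne, htangent x t, add_zero] at hEt
  have hvt : HasDerivAt (fun s => v x s) _ t := hEt.one_div_sq (hΛpp x t)
  have hvx : HasDerivAt (fun y => v y t) _ x :=
    (hasDerivAt_sum_mul_sq lam (hpx x t)).one_div_sq (hΛpp x t)
  have hwx : HasDerivAt (fun y => w y t) _ x :=
    (hasDerivAt_sum_mul_sq (fun i => (lam i)⁻¹) (hpx x t)).neg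
  rw [hvt.deriv, hvx.deriv, hwx.deriv]
  have hE := hΛpp x t
  simp only [v, w]
  field_simp
  ring

theorem stmt_19 (N : ℕ) (α : ℝ) (lam : Fin N → ℝ)
    (hne : ∀ j, lam j ≠ 0) (hdist : Function.Injective lam)
    (p q : ℝ → ℝ → Fin N → ℝ)
    (hΛpp : ∀ x t, ∑ j, lam j * (p x t j)^2 ≠ 0)
    (hpx : ∀ x t j, HasDerivAt (fun y => p y t j) (q x t j) x)
    (hqx : ∀ x t j, HasDerivAt (fun y => q y t j)
      (-α * p x t j
        + (2 * (∑ i, (lam i)^2 * (p x t i)^2) / (∑ i, lam i * (p x t i)^2)^3)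
            * (lam j * p x t j)
        - (1 / (∑ i, lam i * (p x t i)^2)^2) * ((lam j)^2 * p x t j)) x)
    (hpt : ∀ x t j, HasDerivAt (fun s => p x s j)
      (-(∑ i, (lam i)⁻¹ * p x t i * q x t i) * p x t j
        + (∑ i, (lam i)⁻¹ * (p x t i)^2) * q x t j
        + (lam j)⁻¹ * q x t j) t)
    (hsphere : ∀ x t, ∑ j, (p x t j)^2 = 1)
    (htangent : ∀ x t, ∑ j, p x t j * q x t j = 0)
    (hconst : ∀ x t, ∑ j, (q x t j)^2
        + (∑ j, (lam j)^2 * (p x t j)^2) / (∑ j, lam j * (p x t j)^2)^2 = α) :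
    let v : ℝ → ℝ → ℝ := fun x t => 1 / (∑ j, lam j * (p x t j)^2)^2
    let w : ℝ → ℝ → ℝ := fun x t => -(∑ j, (lam j)⁻¹ * (p x t j)^2)
    ∀ x t, deriv (fun s => v x s) t
      = -2 * v x t * deriv (fun y => w y t) x - deriv (fun y => v y t) x * w x t :=
  stmt_19_general N lam hne p q hΛpp hpx hpt htangent
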